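/- Let I be a network coding instance that is (0, R, n)-feasible with a corresponding network code {X_f : f ∈ S ∪ E}, and let e* be an edge of I with capacity R_{e*}. If H(X_S | X_{e*}) = Σ_{i∈S} H(X_i | X_{e*}), then the instance I' obtained from I by removing edge e* is (0, R − R_{e*}·1, n)-feasible, where (R − R_{e*}·1)_i = max(0, R_i − R_{e*}). -/

import Mathlib

open scoped Classical
open Finset

noncomputable section

/-- A network coding instance `I = (N, S, T, M)`: a finite directed acyclic graph with
edge capacities, source nodes (no incoming edges), terminal nodes (no outgoing edges),
and a demand relation (`demands s t` means terminal `t` demands source `s`). -/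
structure NetworkInstance where
  V : Type
  [fintypeV : Fintype V]
  [decEqV : DecidableEq V]
  E : Finset (V × V)
  cap : V × V → ℝ
  cap_pos : ∀ e ∈ E, 0 < cap e
  S : Finset V
  T : Finset V
  demands : V → V → Prop
  src_no_in : ∀ s ∈ S, ∀ e ∈ E, e.2 ≠ s
  ter_no_out : ∀ t ∈ T, ∀ e ∈ E, e.1 ≠ t
  disjointST : Disjoint S T
  acyclic : ∃ ord : V → ℕ, ∀ e ∈ E, ord e.1 < ord e.2

attribute [instance] NetworkInstance.fintypeV NetworkInstance.decEqV

/-- A network code of blocklength `n` and rate vector `R` on the instance `I`.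
Sources are independent and uniform on their (finite, nonempty) alphabets, which is modelled
by taking the whole product of the source alphabets as the (uniform) sample space.
`ge e` is the global encoding function of edge `e` (a function of the source message vector),
`dec t` the decoding function of terminal `t` (a function of the messages on incoming edges
of `t`, producing reconstructions of the demanded sources).
`local_enc` states that the message on an edge `e = (u,v)` is determined by the messages on
the incoming edges of `u` (together with the source message at `u`, when `u` is a source).
`rate` states `H(X_i) = log₂|𝒳_i| ≥ n·R_i`, and `capBound` states `log₂|𝒳_e| ≤ n·R_e`. -/
structure NetworkCode (I : NetworkInstance) (R : I.V → ℝ) (n : ℕ) where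
  srcA : I.V → Type
  edgeA : I.V × I.V → Type
  [finSrc : ∀ v, Fintype (srcA v)]
  [finEdge : ∀ e, Fintype (edgeA e)]
  [neSrc : ∀ v, Nonempty (srcA v)]
  [neEdge : ∀ e, Nonempty (edgeA e)]
  ge : (e : I.V × I.V) → ((s : {v // v ∈ I.S}) → srcA s.1) → edgeA e
  dec : (t : {v // v ∈ I.T}) →
    ((f : {e : I.V × I.V // e ∈ I.E ∧ e.2 = t.1}) → edgeA f.1) →
    ((s : {v // v ∈ I.S ∧ I.demands v t.1}) → srcA s.1)
  local_enc : ∀ e ∈ I.E, ∀ x y : ((s : {v // v ∈ I.S}) → srcA s.1),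
    (∀ s : {v // v ∈ I.S}, (s : I.V) = e.1 → x s = y s) →
    (∀ f ∈ I.E, f.2 = e.1 → ge f x = ge f y) →
    ge e x = ge e y
  rate : ∀ v ∈ I.S, (2 : ℝ) ^ ((n : ℝ) * R v) ≤ Fintype.card (srcA v)
  capBound : ∀ e ∈ I.E, (Fintype.card (edgeA e) : ℝ) ≤ (2 : ℝ) ^ ((n : ℝ) * I.cap e)

attribute [instance] NetworkCode.finSrc NetworkCode.finEdge NetworkCode.neSrc NetworkCode.neEdge

/-- The source message vector space `𝒳_S = ∏ 𝒳_i`; the sources being independent and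
uniform, the probability space is the uniform distribution on `Msg`. -/
abbrev NetworkCode.Msg {I : NetworkInstance} {R : I.V → ℝ} {n : ℕ} (C : NetworkCode I R n) : Type :=
  (s : {v // v ∈ I.S}) → C.srcA s.1

/-- Terminal `t` decodes the source vector `x` correctly. -/
def NetworkCode.Correct {I : NetworkInstance} {R : I.V → ℝ} {n : ℕ} (C : NetworkCode I R n)
    (t : {v // v ∈ I.T}) (x : C.Msg) : Prop :=
  C.dec t (fun f => C.ge f.1 x) = fun s : {v : I.V // v ∈ I.S ∧ I.demands v t.1} => x ⟨s.1, s.2.1⟩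

/-- `x` is "good": every terminal decodes it correctly. -/
def NetworkCode.Good {I : NetworkInstance} {R : I.V → ℝ} {n : ℕ} (C : NetworkCode I R n)
    (x : C.Msg) : Prop := ∀ t, C.Correct t x

/-- The code has decoding error probability at most `ε` at every terminal
(w.r.t. the uniform distribution on source messages). -/
def NetworkCode.Achieves {I : NetworkInstance} {R : I.V → ℝ} {n : ℕ} (C : NetworkCode I R n)
    (ε : ℝ) : Prop :=
  ∀ t : {v // v ∈ I.T},
    ((Finset.univ.filter fun x : C.Msg => ¬ C.Correct t x).card : ℝ) ≤ ε * Fintype.card C.Msg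

/-- `I` is `(ε, R, n)`-feasible. -/
def Feasible (I : NetworkInstance) (ε : ℝ) (R : I.V → ℝ) (n : ℕ) : Prop :=
  ∃ C : NetworkCode I R n, C.Achieves ε

/-- The instance `I'` obtained from `I` by removing the edge `e`. -/
def NetworkInstance.removeEdge (I : NetworkInstance) (e : I.V × I.V) : NetworkInstance where
  V := I.V
  fintypeV := I.fintypeV
  decEqV := I.decEqV
  E := I.E.erase e
  cap := I.cap
  cap_pos := fun f hf => I.cap_pos f (Finset.mem_of_mem_erase hf)
  S := I.S
  T := I.T
  demands := I.demands
  src_no_in := fun s hs f hf => I.src_no_in s hs f (Finset.mem_of_mem_erase hf)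
  ter_no_out := fun t ht f hf => I.ter_no_out t ht f (Finset.mem_of_mem_erase hf)
  disjointST := I.disjointST
  acyclic := ⟨I.acyclic.choose, fun f hf => I.acyclic.choose_spec f (Finset.mem_of_mem_erase hf)⟩

/-- The reduced rate vector `R - R_{e*}·1`, i.e. `i ↦ max 0 (R_i - R_{e*})`. -/
def reducedRate (I : NetworkInstance) (R : I.V → ℝ) (e : I.V × I.V) : I.V → ℝ :=
  fun v => max 0 (R v - I.cap e)

/-- Probability that the random variable `Z` (on the finite uniform sample space `Ω`)
takes the value `z`. -/
def prob {Ω : Type*} [Fintype Ω] {α : Type*} (Z : Ω → α) (z : α) : ℝ :=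
  ((Finset.univ.filter fun ω => Z ω = z).card : ℝ) / (Fintype.card Ω : ℝ)

/-- Shannon entropy (in bits) of a random variable `Z` on the finite uniform sample space `Ω`. -/
def Hent {Ω : Type*} [Fintype Ω] {α : Type*} [Fintype α] (Z : Ω → α) : ℝ :=
  (∑ z : α, Real.negMulLog (prob Z z)) / Real.log 2

/-- Conditional Shannon entropy `H(Z | W) = H(Z, W) - H(W)`. -/
def condH {Ω : Type*} [Fintype Ω] {α β : Type*} [Fintype α] [Fintype β]
    (Z : Ω → α) (W : Ω → β) : ℝ :=
  Hent (fun ω => (Z ω, W ω)) - Hent W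


/-!
Conditional independence of the sources given `X_{e*}` makes every fiber `{X_{e*} = z}` a
product set: by the chain rule both sides of the hypothesis are averages over the fibers, where
subadditivity of entropy holds termwise, and equality in subadditivity forces the uniform
distribution on a fiber to be the product of its marginals. Some fiber has at least
`|𝒳_S| / |𝒳_{e*}|` elements, so each of its sides `A_i` has `|A_i| ≥ |𝒳_i| / 2^{n R_{e*}}`.
Restricting each source to `A_i` makes `X_{e*}` constant, so terminals can substitute that
constant for the removed edge.
-/

section UniformEntropy

variable {Ω α : Type*} [Fintype α]

/-- The entropy, in nats, of `Z` under the uniform distribution on `F`. -/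
def entropyOn (F : Finset Ω) (Z : Ω → α) : ℝ :=
  ∑ a, Real.negMulLog ((F.filter fun ω => Z ω = a).card / F.card)

theorem Hent_eq_entropyOn_univ [Fintype Ω] (Z : Ω → α) :
    Hent Z = entropyOn univ Z / Real.log 2 := by
  rw [Hent, entropyOn, card_univ]
  rfl

theorem sum_negMulLog_card_filter_div (G F : Finset Ω) (Z : Ω → α) :
    ∑ a, Real.negMulLog ((G.filter fun ω => Z ω = a).card / F.card)
      = Real.negMulLog (G.card / F.card) + G.card / F.card * entropyOn G Z := by
  rcases G.eq_empty_or_nonempty with rfl | hG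
  · simp [entropyOn]
  have hG' : (G.card : ℝ) ≠ 0 := by exact_mod_cast hG.card_pos.ne'
  have hsum : ∑ a, ((G.filter fun ω => Z ω = a).card : ℝ) = G.card := by
    exact_mod_cast (card_eq_sum_card_fiberwise fun _ _ => mem_coe.2 (mem_univ _)).symm
  calc ∑ a, Real.negMulLog ((G.filter fun ω => Z ω = a).card / F.card)
      = ∑ a, Real.negMulLog
          (G.card / F.card * ((G.filter fun ω => Z ω = a).card / G.card)) := by
        congr! 2 with a
        field_simp
    _ = _ := by
        simp only [Real.negMulLog_mul, sum_add_distrib, ← sum_mul, ← mul_sum, ← sum_div, hsum,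
          div_self hG', one_mul, entropyOn]

theorem entropyOn_prod_sub {β : Type*} [Fintype β] (F : Finset Ω) (Z : Ω → α) (W : Ω → β) :
    entropyOn F (fun ω => (Z ω, W ω)) - entropyOn F W
      = ∑ w, ((F.filter fun ω => W ω = w).card / F.card : ℝ)
          * entropyOn (F.filter fun ω => W ω = w) Z := by
  have hpair : entropyOn F (fun ω => (Z ω, W ω))
      = ∑ w, ∑ a, Real.negMulLog (((F.filter fun ω => W ω = w).filter fun ω => Z ω = a).card
          / F.card) := by
    rw [entropyOn, Fintype.sum_prod_type, sum_comm]
    refine sum_congr rfl fun w _ => sum_congr rfl fun a _ => ?_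
    congr 4
    ext ω
    simp only [mem_filter, Prod.ext_iff]
    tauto
  rw [hpair, entropyOn]
  simp only [sum_negMulLog_card_filter_div, sum_add_distrib, add_sub_cancel_left]

theorem entropyOn_eq_sum_neg_log (F : Finset Ω) (Z : Ω → α) :
    entropyOn F Z
      = ∑ y ∈ F, -Real.log ((F.filter fun ω => Z ω = Z y).card / F.card) / F.card := by
  rw [entropyOn, ← sum_fiberwise' F Z fun a =>
    -Real.log ((F.filter fun ω => Z ω = a).card / F.card) / F.card]
  refine sum_congr rfl fun a _ => ?_
  rw [sum_const, nsmul_eq_mul, Real.negMulLog]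
  ring

theorem entropyOn_id [Fintype Ω] (F : Finset Ω) :
    entropyOn F (fun ω => ω) = Real.log F.card := by
  rcases F.eq_empty_or_nonempty with rfl | hF
  · simp [entropyOn]
  have hN : (F.card : ℝ) ≠ 0 := by exact_mod_cast hF.card_pos.ne'
  have hsingle : ∀ y ∈ F, (F.filter fun ω => ω = y) = {y} := by
    intro y hy
    ext ω
    simp only [mem_filter, mem_singleton, and_iff_right_iff_imp]
    rintro rfl
    exact hy
  rw [entropyOn_eq_sum_neg_log, sum_congr rfl fun y hy => by rw [hsingle y hy, card_singleton],
    sum_const, nsmul_eq_mul, Nat.cast_one, one_div, Real.log_inv]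
  field_simp

end UniformEntropy

section ProductSpace

variable {ι : Type*} {α : ι → Type*}

/-- The product of the one-dimensional marginals of the uniform distribution on `F`. -/
def marginalProduct [Fintype ι] (F : Finset (∀ i, α i)) (x : ∀ i, α i) : ℝ :=
  ∏ i, ((F.filter fun y => y i = x i).card / F.card : ℝ)

theorem marginalProduct_nonneg [Fintype ι] (F : Finset (∀ i, α i)) (x : ∀ i, α i) :
    0 ≤ marginalProduct F x :=
  prod_nonneg fun _ _ => by positivity

theorem card_filter_apply_eq_div_card_pos {F : Finset (∀ i, α i)} {i : ι} {a : α i}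
    (h : ∃ y ∈ F, y i = a) : 0 < ((F.filter fun y => y i = a).card / F.card : ℝ) := by
  obtain ⟨y, hy, rfl⟩ := h
  have : 0 < (F.filter fun x => x i = y i).card := card_pos.2 ⟨y, mem_filter.2 ⟨hy, rfl⟩⟩
  have : 0 < F.card := card_pos.2 ⟨y, hy⟩
  positivity

theorem marginalProduct_pos [Fintype ι] {F : Finset (∀ i, α i)} {x : ∀ i, α i}
    (hx : ∀ i, ∃ y ∈ F, y i = x i) : 0 < marginalProduct F x :=
  prod_pos fun i _ => card_filter_apply_eq_div_card_pos (hx i)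

theorem sum_marginalProduct [Fintype ι] [DecidableEq ι] [∀ i, Fintype (α i)]
    {F : Finset (∀ i, α i)} (hF : F.Nonempty) :
    ∑ x, marginalProduct F x = 1 := by
  have hN : (F.card : ℝ) ≠ 0 := by exact_mod_cast hF.card_pos.ne'
  unfold marginalProduct
  rw [← Fintype.prod_sum fun i (a : α i) => ((F.filter fun y => y i = a).card / F.card : ℝ)]
  refine prod_eq_one fun i _ => ?_
  rw [← sum_div, div_eq_one_iff_eq hN]
  exact_mod_cast (card_eq_sum_card_fiberwise fun _ _ => mem_coe.2 (mem_univ _)).symm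

/-- Gibbs' inequality for the uniform distribution on `F` against `marginalProduct F`,
via `log t ≤ t - 1`. -/
theorem one_sub_sum_marginalProduct_le [Fintype ι] [∀ i, Fintype (α i)]
    {F : Finset (∀ i, α i)} (hF : F.Nonempty) :
    1 - ∑ y ∈ F, marginalProduct F y ≤ ∑ i, entropyOn F (fun y => y i) - Real.log F.card := by
  have hN : (0 : ℝ) < F.card := by exact_mod_cast hF.card_pos
  have hterm : ∀ y ∈ F, 1 / F.card - marginalProduct F y
      ≤ (∑ i, -Real.log ((F.filter fun x => x i = y i).card / F.card) - Real.log F.card)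
          / F.card := by
    intro y hy
    have hmarg : 0 < marginalProduct F y := marginalProduct_pos fun i => ⟨y, hy, rfl⟩
    have hlog : Real.log (F.card * marginalProduct F y)
        = Real.log F.card + ∑ i, Real.log ((F.filter fun x => x i = y i).card / F.card) := by
      rw [Real.log_mul hN.ne' hmarg.ne', marginalProduct,
        Real.log_prod fun i _ => (card_filter_apply_eq_div_card_pos ⟨y, hy, rfl⟩).ne']
    have hgibbs := Real.log_le_sub_one_of_pos (mul_pos hN hmarg)
    have hscale : (1 / F.card - marginalProduct F y) * F.card
        = 1 - F.card * marginalProduct F y := by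
      field_simp
    rw [le_div_iff₀ hN, hscale, sum_neg_distrib]
    linarith
  calc 1 - ∑ y ∈ F, marginalProduct F y
      = ∑ y ∈ F, (1 / F.card - marginalProduct F y) := by
        rw [sum_sub_distrib, sum_const, nsmul_eq_mul, mul_one_div_cancel hN.ne']
    _ ≤ _ := sum_le_sum hterm
    _ = _ := by
        simp only [entropyOn_eq_sum_neg_log]
        rw [← sum_div, sum_sub_distrib, sum_comm, sum_const, nsmul_eq_mul, sub_div,
          mul_div_cancel_left₀ _ hN.ne']
        simp only [sum_div]

theorem log_card_le_sum_entropyOn [Fintype ι] [DecidableEq ι] [∀ i, Fintype (α i)]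
    (F : Finset (∀ i, α i)) : Real.log F.card ≤ ∑ i, entropyOn F (fun y => y i) := by
  rcases F.eq_empty_or_nonempty with rfl | hF
  · simp [entropyOn]
  have hmass : ∑ y ∈ F, marginalProduct F y ≤ 1 :=
    sum_marginalProduct hF ▸ sum_le_univ_sum_of_nonneg (marginalProduct_nonneg F)
  linarith [one_sub_sum_marginalProduct_le hF]

/-- Equality in subadditivity forces the uniform distribution on `F` to be the product of its
marginals, so `F` is the box spanned by its coordinate projections. -/
theorem mem_of_log_card_eq_sum_entropyOn [Fintype ι] [DecidableEq ι] [∀ i, Fintype (α i)]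
    {F : Finset (∀ i, α i)} (hF : F.Nonempty)
    (heq : Real.log F.card = ∑ i, entropyOn F (fun y => y i)) {x : ∀ i, α i}
    (hx : ∀ i, ∃ y ∈ F, y i = x i) : x ∈ F := by
  have hmass : 1 ≤ ∑ y ∈ F, marginalProduct F y := by
    linarith [one_sub_sum_marginalProduct_le hF]
  have hout : ∑ y ∈ Fᶜ, marginalProduct F y ≤ 0 := by
    linarith [sum_add_sum_compl F (marginalProduct F), sum_marginalProduct hF]
  by_contra hxF
  have := single_le_sum (fun y _ => marginalProduct_nonneg F y) (mem_compl.2 hxF)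
  linarith [marginalProduct_pos hx]

end ProductSpace

theorem condH_eq_sum_entropyOn_fiber {Ω α β : Type*} [Fintype Ω] [Fintype α] [Fintype β]
    (Z : Ω → α) (W : Ω → β) :
    condH Z W = (∑ w, ((univ.filter fun ω => W ω = w).card / Fintype.card Ω : ℝ)
      * entropyOn (univ.filter fun ω => W ω = w) Z) / Real.log 2 := by
  rw [condH, Hent_eq_entropyOn_univ, Hent_eq_entropyOn_univ, ← sub_div, entropyOn_prod_sub,
    card_univ]

/-- Both sides of `hindep` are averages over the fibers of `g` of the two sides of
`log_card_le_sum_entropyOn`, so that inequality is an equality on every fiber. -/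
theorem apply_eq_of_condH_eq_sum {ι β : Type*} {α : ι → Type*} [Fintype ι] [DecidableEq ι]
    [∀ i, Fintype (α i)] [Fintype β] (g : (∀ i, α i) → β)
    (hindep : condH (fun x => x) g = ∑ i, condH (fun x => x i) g) {z : β} (hz : ∃ y, g y = z)
    {x : ∀ i, α i} (hx : ∀ i, ∃ y, g y = z ∧ y i = x i) : g x = z := by
  set F : β → Finset (∀ i, α i) := fun w => univ.filter fun y => g y = w
  set p : β → ℝ := fun w => (F w).card / Fintype.card (∀ i, α i)
  have hgap : ∑ w, p w * (∑ i, entropyOn (F w) (fun y => y i) - Real.log (F w).card) = 0 := by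
    simp only [condH_eq_sum_entropyOn_fiber, entropyOn_id, ← sum_div] at hindep
    rw [div_left_inj' (Real.log_pos one_lt_two).ne', sum_comm] at hindep
    simp only [mul_sub, mul_sum, sum_sub_distrib, hindep, sub_self, p, F]
  have hgap_nonneg :
      ∀ w, 0 ≤ p w * (∑ i, entropyOn (F w) (fun y => y i) - Real.log (F w).card) := fun w =>
    mul_nonneg (by positivity) (sub_nonneg.2 (log_card_le_sum_entropyOn (F w)))
  have hFz : (F z).Nonempty := by
    obtain ⟨y, rfl⟩ := hz
    exact ⟨y, mem_filter.2 ⟨mem_univ y, rfl⟩⟩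
  have hpz : 0 < p z :=
    div_pos (by exact_mod_cast hFz.card_pos) (by exact_mod_cast Fintype.card_pos_iff.2 ⟨x⟩)
  have heq := (mul_eq_zero.1 ((sum_eq_zero_iff_of_nonneg fun w _ => hgap_nonneg w).1 hgap z
    (mem_univ z))).resolve_left hpz.ne'
  have hxF : x ∈ F z := by
    refine mem_of_log_card_eq_sum_entropyOn hFz (sub_eq_zero.1 heq).symm fun i => ?_
    obtain ⟨y, hy, hyx⟩ := hx i
    exact ⟨y, mem_filter.2 ⟨mem_univ y, hy⟩, hyx⟩
  exact (mem_filter.1 hxF).2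

theorem exists_card_le_mul_card_fiber {Ω β : Type*} [Fintype Ω] [Fintype β] [Nonempty β]
    (g : Ω → β) :
    ∃ z, Fintype.card Ω ≤ Fintype.card β * (univ.filter fun ω => g ω = z).card := by
  have hβ : (0 : ℚ) < Fintype.card β := by exact_mod_cast Fintype.card_pos
  obtain ⟨z, hz⟩ := Fintype.exists_le_card_fiber_of_nsmul_le_card g
    (b := (Fintype.card Ω / Fintype.card β : ℚ))
    (by rw [nsmul_eq_mul, mul_div_cancel₀ _ hβ.ne'])
  refine ⟨z, ?_⟩
  rw [div_le_iff₀' hβ] at hz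
  exact_mod_cast hz

theorem card_le_mul_card_of_card_pi_le {ι : Type*} [Fintype ι] [DecidableEq ι] {α : ι → Type*}
    [∀ i, Fintype (α i)] [∀ i, Nonempty (α i)] (A : ∀ i, Finset (α i)) {K : ℕ}
    (h : Fintype.card (∀ i, α i) ≤ K * ∏ i, (A i).card) (i : ι) :
    Fintype.card (α i) ≤ K * (A i).card := by
  have hrest : 0 < ∏ j ∈ univ.erase i, Fintype.card (α j) :=
    prod_pos fun j _ => Fintype.card_pos
  refine Nat.le_of_mul_le_mul_right ?_ hrest
  calc Fintype.card (α i) * ∏ j ∈ univ.erase i, Fintype.card (α j)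
      = Fintype.card (∀ i, α i) := by
        rw [mul_prod_erase univ (fun j => Fintype.card (α j)) (mem_univ i), Fintype.card_pi]
    _ ≤ K * ((A i).card * ∏ j ∈ univ.erase i, (A j).card) := by
        rwa [mul_prod_erase univ (fun j => (A j).card) (mem_univ i)]
    _ ≤ K * (A i).card * ∏ j ∈ univ.erase i, Fintype.card (α j) := by
        rw [mul_assoc]
        gcongr
        exact card_le_univ _

theorem two_rpow_mul_max_sub_le {n r c k : ℝ} (hk : 1 ≤ k)
    (h : (2 : ℝ) ^ (n * r) ≤ 2 ^ (n * c) * k) : (2 : ℝ) ^ (n * max 0 (r - c)) ≤ k := by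
  rcases le_total (r - c) 0 with hrc | hrc
  · rwa [max_eq_left hrc, mul_zero, Real.rpow_zero]
  · rw [max_eq_right hrc, mul_sub, Real.rpow_sub two_pos, div_le_iff₀ (by positivity)]
    linarith

namespace NetworkCode

variable {I : NetworkInstance} {R : I.V → ℝ} {n : ℕ} (C : NetworkCode I R n)

theorem achieves_zero_iff : C.Achieves 0 ↔ ∀ t x, C.Correct t x := by
  refine ⟨fun hC t x => ?_, fun hC t => ?_⟩
  · by_contra hx
    have hbad : (0 : ℝ) < (univ.filter fun x : C.Msg => ¬ C.Correct t x).card := by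
      exact_mod_cast card_pos.2 ⟨x, mem_filter.2 ⟨mem_univ x, hx⟩⟩
    linarith [hC t]
  · rw [zero_mul, filter_false_of_mem fun x _ => not_not.2 (hC t x), card_empty, Nat.cast_zero]

section Restriction

variable (A : (s : {v // v ∈ I.S}) → Finset (C.srcA s.1))

def RestrictedSrc (v : I.V) : Type := {a : C.srcA v // ∀ h : v ∈ I.S, a ∈ A ⟨v, h⟩}

instance (v : I.V) : Fintype (C.RestrictedSrc A v) := Subtype.fintype _

theorem card_restrictedSrc {v : I.V} (hv : v ∈ I.S) :
    Fintype.card (C.RestrictedSrc A v) = (A ⟨v, hv⟩).card :=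
  Fintype.card_of_subtype (p := fun a : C.srcA v => ∀ h : v ∈ I.S, a ∈ A ⟨v, h⟩) _
    fun _ => ⟨fun h _ => h, fun h => h hv⟩

theorem restrictedSrc_nonempty (hne : ∀ s, (A s).Nonempty) (v : I.V) :
    Nonempty (C.RestrictedSrc A v) := by
  by_cases hv : v ∈ I.S
  · obtain ⟨a, ha⟩ := hne ⟨v, hv⟩
    exact ⟨⟨a, fun _ => ha⟩⟩
  · exact ⟨⟨Classical.arbitrary _, fun h => absurd h hv⟩⟩

def restrictedVal (x : (s : {v // v ∈ I.S}) → C.RestrictedSrc A s.1) : C.Msg :=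
  fun s => (x s).1

theorem restrictedVal_mem (x : (s : {v // v ∈ I.S}) → C.RestrictedSrc A s.1)
    (s : {v // v ∈ I.S}) : C.restrictedVal A x s ∈ A s :=
  (x s).2 s.2

variable {A} in
def toRestrictedSrc (hne : ∀ s, (A s).Nonempty) {v : I.V} (a : C.srcA v) :
    C.RestrictedSrc A v :=
  haveI := C.restrictedSrc_nonempty A hne v
  if h : ∀ hv : v ∈ I.S, a ∈ A ⟨v, hv⟩ then ⟨a, h⟩ else Classical.arbitrary _

variable {A} in
theorem toRestrictedSrc_val (hne : ∀ s, (A s).Nonempty) {v : I.V} (a : C.RestrictedSrc A v) :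
    C.toRestrictedSrc hne a.1 = a :=
  dif_pos a.2

variable (e : I.V × I.V) {z : C.edgeA e}

/-- Decoding after removing `e`: terminals run the old decoder, reading in place of `X_e` its
value on a fixed restricted message. -/
def restrictedDec (hne : ∀ s, (A s).Nonempty) (t : {v // v ∈ I.T})
    (m : (f : {f : I.V × I.V // f ∈ I.E.erase e ∧ f.2 = t.1}) → C.edgeA f.1)
    (s : {v // v ∈ I.S ∧ I.demands v t.1}) : C.RestrictedSrc A s.1 :=
  haveI := C.restrictedSrc_nonempty A hne
  C.toRestrictedSrc hne <| C.dec t (fun f => if h : f.1 = e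
    then C.ge f.1 (C.restrictedVal A (Classical.arbitrary _))
    else m ⟨f.1, mem_erase.2 ⟨h, f.2.1⟩, f.2.2⟩) s

def restrict (hne : ∀ s, (A s).Nonempty)
    (hA : ∀ x : C.Msg, (∀ s, x s ∈ A s) → C.ge e x = z)
    (R' : I.V → ℝ)
    (hrate : ∀ v (hv : v ∈ I.S), (2 : ℝ) ^ ((n : ℝ) * R' v) ≤ (A ⟨v, hv⟩).card) :
    NetworkCode (I.removeEdge e) R' n where
  srcA := C.RestrictedSrc A
  edgeA := C.edgeA
  finSrc := C.instFintypeRestrictedSrc A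
  finEdge := C.finEdge
  neSrc := C.restrictedSrc_nonempty A hne
  neEdge := C.neEdge
  ge f x := C.ge f (C.restrictedVal A x)
  dec := C.restrictedDec A e hne
  local_enc f hf x y hsrc hin := by
    refine C.local_enc f (mem_of_mem_erase hf) _ _
      (fun s hs => congrArg Subtype.val (hsrc s hs)) fun f' hf' hf'2 => ?_
    by_cases he : f' = e
    · subst he
      exact (hA _ (C.restrictedVal_mem A x)).trans (hA _ (C.restrictedVal_mem A y)).symm
    · exact hin f' (mem_erase.2 ⟨he, hf'⟩) hf'2
  rate v hv := (C.card_restrictedSrc A hv).symm ▸ hrate v hv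
  capBound f hf := C.capBound f (mem_of_mem_erase hf)

theorem restrict_correct (hC : ∀ t x, C.Correct t x) (hne : ∀ s, (A s).Nonempty)
    (hA : ∀ x : C.Msg, (∀ s, x s ∈ A s) → C.ge e x = z)
    (R' : I.V → ℝ)
    (hrate : ∀ v (hv : v ∈ I.S), (2 : ℝ) ^ ((n : ℝ) * R' v) ≤ (A ⟨v, hv⟩).card) :
    ∀ t x, (C.restrict A e hne hA R' hrate).Correct t x := by
  have := C.restrictedSrc_nonempty A hne
  intro t x
  funext s
  have hmsg : (fun f : {f : I.V × I.V // f ∈ I.E ∧ f.2 = t.1} =>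
      if f.1 = e then C.ge f.1 (C.restrictedVal A (Classical.arbitrary _))
      else C.ge f.1 (C.restrictedVal A x))
      = fun f : {f : I.V × I.V // f ∈ I.E ∧ f.2 = t.1} => C.ge f.1 (C.restrictedVal A x) := by
    funext ⟨f, hf⟩
    split_ifs with h
    · obtain rfl : f = e := h
      exact (hA _ (C.restrictedVal_mem A _)).trans (hA _ (C.restrictedVal_mem A x)).symm
    · rfl
  have hdec := congrFun (hC t (C.restrictedVal A x)) s
  simp only [restrict, restrictedDec, dite_eq_ite]
  rw [hmsg, hdec]
  exact C.toRestrictedSrc_val hne _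

end Restriction

end NetworkCode

/-- Under conditional independence the largest fiber of `g` is a box, and a box of at least
`1 / |β|` of the space has every side of relative size at least `1 / |β|`. -/
theorem exists_large_box_of_condH_eq_sum {ι β : Type*} {α : ι → Type*} [Fintype ι]
    [DecidableEq ι] [∀ i, Fintype (α i)] [∀ i, Nonempty (α i)] [Fintype β]
    (g : (∀ i, α i) → β) (hindep : condH (fun x => x) g = ∑ i, condH (fun x => x i) g) :
    ∃ (z : β) (A : ∀ i, Finset (α i)),
      (∀ i, Fintype.card (α i) ≤ Fintype.card β * (A i).card) ∧
        ∀ x, (∀ i, x i ∈ A i) → g x = z := by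
  have : Nonempty β := ⟨g (Classical.arbitrary _)⟩
  obtain ⟨z, hz⟩ := exists_card_le_mul_card_fiber g
  set F := univ.filter fun x => g x = z
  have hF : F.Nonempty := card_pos.1 (Nat.pos_of_mul_pos_left (Fintype.card_pos.trans_le hz))
  refine ⟨z, fun i => F.image fun x => x i, card_le_mul_card_of_card_pi_le _ ?_, fun x hx => ?_⟩
  · refine hz.trans (Nat.mul_le_mul_left _ ?_)
    rw [← Fintype.card_piFinset]
    exact card_le_card fun y hy => Fintype.mem_piFinset.2 fun i => mem_image_of_mem _ hy
  · obtain ⟨y, hy⟩ := hF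
    refine apply_eq_of_condH_eq_sum g hindep ⟨y, (mem_filter.1 hy).2⟩ fun i => ?_
    obtain ⟨y, hy, hyx⟩ := mem_image.1 (hx i)
    exact ⟨y, (mem_filter.1 hy).2, hyx⟩

/-- **Corollary 3.** If `I` is `(0,R,n)`-feasible with code `C` and the sources are
conditionally independent given the message on edge `e*`,
i.e. `H(X_S | X_{e*}) = Σ_{i∈S} H(X_i | X_{e*})`, then removing `e*` leaves the
instance `(0, R - R_{e*}·1, n)`-feasible. -/
theorem local_edge_removal_of_cond_indep
    (I : NetworkInstance) (R : I.V → ℝ) (n : ℕ)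
    (C : NetworkCode I R n) (hfeas : C.Achieves 0)
    (estar : I.V × I.V) (he : estar ∈ I.E)
    (hindep : condH (fun x : C.Msg => x) (C.ge estar)
      = ∑ s : {v // v ∈ I.S}, condH (fun x : C.Msg => x s) (C.ge estar)) :
    Feasible (I.removeEdge estar) 0 (reducedRate I R estar) n := by
  obtain ⟨z, A, hcard, hbox⟩ := exists_large_box_of_condH_eq_sum (C.ge estar) hindep
  have hne : ∀ s, (A s).Nonempty := fun s =>
    card_pos.1 (Nat.pos_of_mul_pos_left (Fintype.card_pos.trans_le (hcard s)))
  have hrate : ∀ v (hv : v ∈ I.S),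
      (2 : ℝ) ^ ((n : ℝ) * reducedRate I R estar v) ≤ (A ⟨v, hv⟩).card := by
    intro v hv
    refine two_rpow_mul_max_sub_le (Nat.one_le_cast.2 (hne _).card_pos) ?_
    calc (2 : ℝ) ^ ((n : ℝ) * R v) ≤ Fintype.card (C.srcA v) := C.rate v hv
      _ ≤ Fintype.card (C.edgeA estar) * (A ⟨v, hv⟩).card := by exact_mod_cast hcard ⟨v, hv⟩
      _ ≤ 2 ^ ((n : ℝ) * I.cap estar) * (A ⟨v, hv⟩).card := by
        gcongr
        exact C.capBound estar he
  exact ⟨C.restrict A estar hne hbox _ hrate, (NetworkCode.achieves_zero_iff _).2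
    (C.restrict_correct A estar (C.achieves_zero_iff.1 hfeas) hne hbox _ hrate)⟩
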